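/- arXiv:2506.14579 — 4 statements merged into one kernel-verified Lean document; each statement's English description precedes it below -/
import Mathlib

section
/- Let 1 < p < ∞, let Ω ⊂ ℝⁿ be open, f ∈ C¹(ℝ), u ∈ C³(Ω), F a primitive of f, and Q(x) = ((p-1)/p)|∇u(x)|^p + F(u(x)). Then at every point x ∈ Ω with ∇u(x) ≠ 0, the Hessian of u satisfies (with summation over repeated indices) |∇u|^{p−2} · Σ_{i,k} u_{ki}² ≥ (1/((p−1)²|∇u|^p)) · ( |∇Q|² − 2 f(u) u_i Q_i + f(u)² |∇u|² ). -/
/-! Differentiating `Q` gives `Q_i - f(u) u_i = (p-1) |∇u|^{p-2} ⟪∇u, ∂_i ∇u⟫`, so the bracket on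
the right-hand side is `Σ_i (Q_i - f(u) u_i)² = (p-1)² |∇u|^{2p-4} Σ_i ⟪∇u, ∂_i ∇u⟫²`.
Cauchy–Schwarz bounds each `⟪∇u, ∂_i ∇u⟫²` by `|∇u|² |∂_i ∇u|²`, and
`Σ_i |∂_i ∇u|² = Σ_{i,k} u_{ki}²`. -/


open Set Filter
open scoped BigOperators Topology

noncomputable section

/-- The `i`-th partial derivative of `u` at `x`. -/
def pder {n : ℕ} (i : Fin n) (u : EuclideanSpace ℝ (Fin n) → ℝ)
    (x : EuclideanSpace ℝ (Fin n)) : ℝ :=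
  fderiv ℝ u x (EuclideanSpace.single i (1 : ℝ))

/-- The second partial derivative `∂²u/∂xᵢ∂xⱼ` of `u` at `x`. -/
def pder2 {n : ℕ} (i j : Fin n) (u : EuclideanSpace ℝ (Fin n) → ℝ)
    (x : EuclideanSpace ℝ (Fin n)) : ℝ :=
  fderiv ℝ (fun y => pder j u y) x (EuclideanSpace.single i (1 : ℝ))

/-- The `p`-Laplacian `Δ_p u = div (|∇u|^{p-2} ∇u)` of `u` at `x`, written as the
divergence of the vector field `y ↦ ‖∇u(y)‖^{p-2} ∇u(y)`. -/
def pLaplacian {n : ℕ} (p : ℝ) (u : EuclideanSpace ℝ (Fin n) → ℝ)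
    (x : EuclideanSpace ℝ (Fin n)) : ℝ :=
  ∑ i : Fin n,
    fderiv ℝ (fun y => ‖gradient u y‖ ^ (p - 2) * gradient u y i) x
      (EuclideanSpace.single i (1 : ℝ))

/-- `Ω ⊆ ℝⁿ` is a `C¹` domain: a connected open set which near each boundary point is the
sublevel set of a `C¹` defining function with nonvanishing differential. -/
def IsC1Domain {n : ℕ} (Ω : Set (EuclideanSpace ℝ (Fin n))) : Prop :=
  IsOpen Ω ∧ IsConnected Ω ∧
    ∀ q ∈ frontier Ω,
      ∃ (ρ : EuclideanSpace ℝ (Fin n) → ℝ) (V : Set (EuclideanSpace ℝ (Fin n))),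
        q ∈ V ∧ IsOpen V ∧ ContDiffOn ℝ 1 ρ V ∧ (∀ x ∈ V, fderiv ℝ ρ x ≠ 0) ∧
        Ω ∩ V = {x ∈ V | ρ x < 0}

/-- `ν` is the exterior unit normal field of `∂Ω`: at each boundary point it is a unit
vector pointing instantaneously out of `closure Ω` and, in the opposite direction, into `Ω`. -/
def IsExteriorUnitNormal {n : ℕ} (Ω : Set (EuclideanSpace ℝ (Fin n)))
    (ν : EuclideanSpace ℝ (Fin n) → EuclideanSpace ℝ (Fin n)) : Prop :=
  ∀ q ∈ frontier Ω, ‖ν q‖ = 1 ∧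
    ∃ ε > (0 : ℝ), ∀ t ∈ Ioo (0 : ℝ) ε, q + t • ν q ∉ closure Ω ∧ q - t • ν q ∈ Ω

/-- `u` is a `C³` (in `Ω`, `C¹` up to the boundary) solution of the overdetermined
problem (P): `Δ_p u + f(u) = 0` and `u > 0` in `Ω`, `u = 0` and `∂_ν u = -κ` on `∂Ω`. -/
structure PSolution {n : ℕ} (p : ℝ) (Ω : Set (EuclideanSpace ℝ (Fin n))) (f : ℝ → ℝ)
    (κ : ℝ) (ν : EuclideanSpace ℝ (Fin n) → EuclideanSpace ℝ (Fin n))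
    (u : EuclideanSpace ℝ (Fin n) → ℝ) : Prop where
  contDiffOn_int : ContDiffOn ℝ 3 u Ω
  contDiffOn_bd : ContDiffOn ℝ 1 u (closure Ω)
  eqn : ∀ x ∈ Ω, pLaplacian p u x + f (u x) = 0
  pos : ∀ x ∈ Ω, 0 < u x
  dirichlet : ∀ q ∈ frontier Ω, u q = 0
  neumann : ∀ q ∈ frontier Ω, (inner ℝ (gradient u q) (ν q) : ℝ) = -κ

/-- `F` is a primitive of `f`. -/
def IsPrimitive (F f : ℝ → ℝ) : Prop := ∀ s : ℝ, HasDerivAt F (f s) s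

/-- The `Q`-function `Q(x) = ((p-1)/p) |∇u(x)|^p + F(u(x))`. -/
def Qfun {n : ℕ} (p : ℝ) (F : ℝ → ℝ) (u : EuclideanSpace ℝ (Fin n) → ℝ)
    (x : EuclideanSpace ℝ (Fin n)) : ℝ :=
  (p - 1) / p * ‖gradient u x‖ ^ p + F (u x)

/-- Whenever `F u₀ = 0`, one has `F(u) = O(|u - u₀|^p)` as `u → u₀`. -/
def BigOCond (p : ℝ) (F : ℝ → ℝ) : Prop :=
  ∀ u₀ : ℝ, F u₀ = 0 → Asymptotics.IsBigO (𝓝 u₀) F fun s => |s - u₀| ^ p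

/-- `Ω` is an (open) half-space. -/
def IsHalfSpace {n : ℕ} (Ω : Set (EuclideanSpace ℝ (Fin n))) : Prop :=
  ∃ x₀ a : EuclideanSpace ℝ (Fin n), a ≠ 0 ∧ Ω = {x | 0 < (inner ℝ a (x - x₀) : ℝ)}

/-- `Ω` is a slab: the open region between two parallel hyperplanes. -/
def IsSlab {n : ℕ} (Ω : Set (EuclideanSpace ℝ (Fin n))) : Prop :=
  ∃ (x₀ a : EuclideanSpace ℝ (Fin n)) (z₁ z₂ : ℝ), a ≠ 0 ∧ z₁ < z₂ ∧
    Ω = {x | (inner ℝ a (x - x₀) : ℝ) ∈ Ioo z₁ z₂}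

/-- `u` is parallel (`1`-dimensional): `u(x) = g(a · (x - x₀))` on `{a · (x - x₀) > 0}`. -/
def IsParallel {n : ℕ} (u : EuclideanSpace ℝ (Fin n) → ℝ) : Prop :=
  ∃ (x₀ a : EuclideanSpace ℝ (Fin n)) (g : ℝ → ℝ),
    ∀ x : EuclideanSpace ℝ (Fin n), 0 < (inner ℝ a (x - x₀) : ℝ) → u x = g ((inner ℝ a (x - x₀) : ℝ))

/-- `u` is parallel on `Ω`: `u(x) = g(a · (x - x₀))` for all `x ∈ Ω`. -/
def IsParallelOn {n : ℕ} (Ω : Set (EuclideanSpace ℝ (Fin n)))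
    (u : EuclideanSpace ℝ (Fin n) → ℝ) : Prop :=
  ∃ (x₀ a : EuclideanSpace ℝ (Fin n)) (g : ℝ → ℝ), a ≠ 0 ∧
    ∀ x ∈ Ω, u x = g ((inner ℝ a (x - x₀) : ℝ))

/-- `H` is the mean curvature of `∂Ω` with respect to the exterior unit normal `ν`:
`H = div N / (n-1)` on `∂Ω` for some `C¹` unit vector field `N` extending `ν` to a
neighbourhood of `∂Ω`. -/
def IsMeanCurvature {n : ℕ} (Ω : Set (EuclideanSpace ℝ (Fin n)))
    (ν : EuclideanSpace ℝ (Fin n) → EuclideanSpace ℝ (Fin n))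
    (H : EuclideanSpace ℝ (Fin n) → ℝ) : Prop :=
  ∃ (N : EuclideanSpace ℝ (Fin n) → EuclideanSpace ℝ (Fin n))
    (U : Set (EuclideanSpace ℝ (Fin n))),
      IsOpen U ∧ frontier Ω ⊆ U ∧ ContDiffOn ℝ 1 N U ∧ (∀ x ∈ U, ‖N x‖ = 1) ∧
      (∀ q ∈ frontier Ω, N q = ν q) ∧
      ∀ q ∈ frontier Ω,
        H q = (∑ i : Fin n,
            fderiv ℝ (fun y => N y i) q (EuclideanSpace.single i (1 : ℝ))) / ((n : ℝ) - 1)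

open InnerProductSpace

theorem ContDiffAt.differentiableAt_gradient {E : Type*} [NormedAddCommGroup E]
    [InnerProductSpace ℝ E] [CompleteSpace E] {u : E → ℝ} {x : E} (hu : ContDiffAt ℝ 2 u x) :
    DifferentiableAt ℝ (gradient u) x :=
  (toDual ℝ E).symm.toContinuousLinearEquiv.differentiableAt.comp x
    ((hu.fderiv_right (by norm_num)).differentiableAt one_ne_zero)

theorem sum_inner_sq_le_norm_sq_mul {E ι : Type*} [NormedAddCommGroup E] [InnerProductSpace ℝ E]
    (s : Finset ι) (g : E) (w : ι → E) :
    ∑ i ∈ s, (inner ℝ g (w i) : ℝ) ^ 2 ≤ ‖g‖ ^ 2 * ∑ i ∈ s, ‖w i‖ ^ 2 := by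
  rw [Finset.mul_sum]
  refine Finset.sum_le_sum fun i _ => ?_
  rw [← mul_pow, ← sq_abs]
  exact pow_le_pow_left₀ (abs_nonneg _) (abs_real_inner_le_norm g (w i)) 2

theorem sum_sq_sub_two_mul_sum_add_eq {ι : Type*} (s : Finset ι) (q b : ι → ℝ) (c : ℝ) :
    ∑ i ∈ s, q i ^ 2 - 2 * c * ∑ i ∈ s, b i * q i + c ^ 2 * ∑ i ∈ s, b i ^ 2
      = ∑ i ∈ s, (q i - c * b i) ^ 2 := by
  rw [Finset.mul_sum, Finset.mul_sum, ← Finset.sum_sub_distrib, ← Finset.sum_add_distrib]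
  exact Finset.sum_congr rfl fun i _ => by ring

theorem pder_eq_gradient_apply {n : ℕ} (i : Fin n) (u : EuclideanSpace ℝ (Fin n) → ℝ)
    (y : EuclideanSpace ℝ (Fin n)) : pder i u y = gradient u y i := by
  rw [pder, ← inner_gradient_left, EuclideanSpace.inner_single_right]
  simp

section PartialDerivatives

variable {n : ℕ} {u : EuclideanSpace ℝ (Fin n) → ℝ} {x : EuclideanSpace ℝ (Fin n)}

theorem pder2_eq_fderiv_gradient_apply (hG : DifferentiableAt ℝ (gradient u) x) (k i : Fin n) :
    pder2 k i u x = fderiv ℝ (gradient u) x (EuclideanSpace.single k 1) i := by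
  have hpder : (fun y => pder i u y) = EuclideanSpace.proj i ∘ gradient u :=
    funext fun y => pder_eq_gradient_apply i u y
  rw [pder2, hpder, ((EuclideanSpace.proj i).hasFDerivAt.comp x hG.hasFDerivAt).fderiv]
  rfl

theorem sum_sq_pder2_eq (hG : DifferentiableAt ℝ (gradient u) x) :
    ∑ i, ∑ k, pder2 k i u x ^ 2
      = ∑ k, ‖fderiv ℝ (gradient u) x (EuclideanSpace.single k 1)‖ ^ 2 := by
  simp only [pder2_eq_fderiv_gradient_apply hG, EuclideanSpace.norm_sq_eq, Real.norm_eq_abs,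
    sq_abs]
  exact Finset.sum_comm

theorem hasFDerivAt_Qfun {p : ℝ} (hp : 1 < p) {F f : ℝ → ℝ} (hFf : IsPrimitive F f)
    (hu : ContDiffAt ℝ 2 u x) :
    HasFDerivAt (Qfun p F u)
      (((p - 1) * ‖gradient u x‖ ^ (p - 2)) •
          (innerSL ℝ (gradient u x)).comp (fderiv ℝ (gradient u) x)
        + f (u x) • fderiv ℝ u x) x := by
  have hnorm := (hasFDerivAt_norm_rpow (gradient u x) hp).comp x
    hu.differentiableAt_gradient.hasFDerivAt
  have hF := (hFf (u x)).comp_hasFDerivAt x (hu.differentiableAt two_ne_zero).hasFDerivAt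
  refine ((hnorm.const_mul ((p - 1) / p)).add hF).congr_fderiv ?_
  have hp0 : p ≠ 0 := by positivity
  ext v
  simp only [ContinuousLinearMap.smul_comp, add_apply, smul_apply,
    ContinuousLinearMap.comp_apply, coe_innerSL_apply, smul_eq_mul]
  field_simp

theorem pder_Qfun_sub {p : ℝ} (hp : 1 < p) {F f : ℝ → ℝ} (hFf : IsPrimitive F f)
    (hu : ContDiffAt ℝ 2 u x) (i : Fin n) :
    pder i (Qfun p F u) x - f (u x) * pder i u x
      = (p - 1) * ‖gradient u x‖ ^ (p - 2) *
          inner ℝ (gradient u x) (fderiv ℝ (gradient u) x (EuclideanSpace.single i 1)) := by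
  rw [pder, (hasFDerivAt_Qfun hp hFf hu).fderiv, pder]
  simp

end PartialDerivatives

theorem statement_9_general (n : ℕ) (p : ℝ) (hp : 1 < p)
    (Ω : Set (EuclideanSpace ℝ (Fin n))) (hΩ : IsOpen Ω)
    (f : ℝ → ℝ)
    (u : EuclideanSpace ℝ (Fin n) → ℝ) (hu : ContDiffOn ℝ 3 u Ω)
    (F : ℝ → ℝ) (hFf : IsPrimitive F f)
    (x : EuclideanSpace ℝ (Fin n)) (hx : x ∈ Ω) (hgrad : gradient u x ≠ 0) :
    ‖gradient u x‖ ^ (p - 2) *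
        (∑ i : Fin n, ∑ k : Fin n, (pder2 k i u x) ^ 2)
      ≥ 1 / ((p - 1) ^ 2 * ‖gradient u x‖ ^ p) *
          ((∑ i : Fin n, (pder i (Qfun p F u) x) ^ 2)
            - 2 * f (u x) * (∑ i : Fin n, pder i u x * pder i (Qfun p F u) x)
            + f (u x) ^ 2 * ‖gradient u x‖ ^ 2) := by
  have hu2 : ContDiffAt ℝ 2 u x := (hu.contDiffAt (hΩ.mem_nhds hx)).of_le (by norm_num)
  set g := gradient u x
  set w := fun i : Fin n => fderiv ℝ (gradient u) x (EuclideanSpace.single i 1)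
  have hnum : ∑ i, pder i (Qfun p F u) x ^ 2
        - 2 * f (u x) * ∑ i, pder i u x * pder i (Qfun p F u) x + f (u x) ^ 2 * ‖g‖ ^ 2
      = ((p - 1) * ‖g‖ ^ (p - 2)) ^ 2 * ∑ i, (inner ℝ g (w i) : ℝ) ^ 2 := by
    have hg : ‖g‖ ^ 2 = ∑ i, pder i u x ^ 2 := by
      simp only [EuclideanSpace.norm_sq_eq, Real.norm_eq_abs, sq_abs, pder_eq_gradient_apply, g]
    rw [hg, sum_sq_sub_two_mul_sum_add_eq, Finset.mul_sum]
    simp only [pder_Qfun_sub hp hFf hu2, mul_pow, w, g]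
  have hr : 0 < ‖g‖ := norm_pos_iff.mpr hgrad
  rw [ge_iff_le, hnum, sum_sq_pder2_eq hu2.differentiableAt_gradient, ← mul_assoc]
  calc _ ≤ 1 / ((p - 1) ^ 2 * ‖g‖ ^ p) * ((p - 1) * ‖g‖ ^ (p - 2)) ^ 2 *
          (‖g‖ ^ 2 * ∑ i, ‖w i‖ ^ 2) :=
        mul_le_mul_of_nonneg_left (sum_inner_sq_le_norm_sq_mul _ g w) (by positivity)
    _ = ‖g‖ ^ (p - 2) * ∑ i, ‖w i‖ ^ 2 := by
        have hp1 : p - 1 ≠ 0 := by linarith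
        have hsplit : ‖g‖ ^ p = ‖g‖ ^ (p - 2) * ‖g‖ ^ 2 := by
          rw [← Real.rpow_natCast, ← Real.rpow_add hr]; norm_num
        rw [hsplit]
        field_simp [(Real.rpow_pos_of_pos hr (p - 2)).ne']

/-- estimate (2.5): lower bound for |∇u|^{p-2} Σ u_{ki}² via the gradient of Q. -/
theorem statement_9 (n : ℕ) (p : ℝ) (hp : 1 < p)
    (Ω : Set (EuclideanSpace ℝ (Fin n))) (hΩ : IsOpen Ω)
    (f : ℝ → ℝ) (hf : ContDiff ℝ 1 f)
    (u : EuclideanSpace ℝ (Fin n) → ℝ) (hu : ContDiffOn ℝ 3 u Ω)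
    (F : ℝ → ℝ) (hFf : IsPrimitive F f)
    (x : EuclideanSpace ℝ (Fin n)) (hx : x ∈ Ω) (hgrad : gradient u x ≠ 0) :
    ‖gradient u x‖ ^ (p - 2) *
        (∑ i : Fin n, ∑ k : Fin n, (pder2 k i u x) ^ 2)
      ≥ 1 / ((p - 1) ^ 2 * ‖gradient u x‖ ^ p) *
          ((∑ i : Fin n, (pder i (Qfun p F u) x) ^ 2)
            - 2 * f (u x) * (∑ i : Fin n, pder i u x * pder i (Qfun p F u) x)
            + f (u x) ^ 2 * ‖gradient u x‖ ^ 2) :=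
  statement_9_general n p hp Ω hΩ f u hu F hFf x hx hgrad
end
end

section
/- Let 1 < p < ∞, let Ω ⊂ ℝⁿ be open, f ∈ C¹(ℝ), and let u ∈ C³(Ω) satisfy div(|∇u|^{p-2}∇u) + f(u) = 0 in Ω. Let F be a primitive of f and Q(x) = ((p-1)/p)|∇u(x)|^p + F(u(x)). Then at every point x ∈ Ω with ∇u(x) ≠ 0, one has the identity (Einstein summation): (1/(p−1))·ΔQ + ((p−2) u_i u_j/((p−1)|∇u|²))·Q_{ij} = |∇u|^{p−2} Σ_{i,k} u_{ki}² + p(p−2)(Q_i u_i)²/((p−1)²|∇u|^{p+2}) − (p−2)(p+1) f(u) (Q_i u_i)/((p−1)²|∇u|^p) − f(u)²/((p−1)²|∇u|^{p−2}). -/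
open Set Filter
open scoped BigOperators Topology

noncomputable section

/-!
Off the critical set, with `w = |∇u|²` and `A = w^{(p-2)/2}`, the equation reads
`(p-2) w^{(p-4)/2} u_i u_j u_{ij} + A Δu = -f(u)` and `Q_i = (p-1) A u_k u_{ik} + f(u) u_i`.
Differentiating `Q` once more, `ΔQ` and `u_i u_j Q_{ij}` contain third derivatives of `u` only
through `⟨∇u, ∇Δu⟩` (Bochner's formula) and `⟨∇u, ∇(u_i u_j u_{ij})⟩`, and the left-hand side
combines them exactly as the equation differentiated along `∇u` does. Eliminating this combination,
and `Δu` by the equation itself, leaves a rational identity in `|∇u|`, `f(u)` and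
quadratic Hessian terms.
-/

section PartialDerivatives

variable {n : ℕ} {g h u : EuclideanSpace ℝ (Fin n) → ℝ} {y : EuclideanSpace ℝ (Fin n)}

lemma pder_add (i : Fin n) (hg : DifferentiableAt ℝ g y) (hh : DifferentiableAt ℝ h y) :
    pder i (fun z => g z + h z) y = pder i g y + pder i h y := by
  simp [pder, fderiv_fun_add hg hh]

lemma pder_mul (i : Fin n) (hg : DifferentiableAt ℝ g y) (hh : DifferentiableAt ℝ h y) :
    pder i (fun z => g z * h z) y = pder i g y * h y + g y * pder i h y := by
  simp [pder, fderiv_fun_mul hg hh]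
  ring

lemma pder_const_mul (i : Fin n) (c : ℝ) (hg : DifferentiableAt ℝ g y) :
    pder i (fun z => c * g z) y = c * pder i g y := by
  simp [pder, fderiv_const_mul hg]

lemma pder_sum {ι : Type*} (i : Fin n) (s : Finset ι) {A : ι → EuclideanSpace ℝ (Fin n) → ℝ}
    (hA : ∀ k ∈ s, DifferentiableAt ℝ (A k) y) :
    pder i (fun z => ∑ k ∈ s, A k z) y = ∑ k ∈ s, pder i (A k) y := by
  simp [pder, fderiv_fun_sum hA]

lemma pder_comp (i : Fin n) {φ : ℝ → ℝ} {φ' : ℝ} (hφ : HasDerivAt φ φ' (g y))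
    (hg : DifferentiableAt ℝ g y) : pder i (fun z => φ (g z)) y = φ' * pder i g y := by
  simp [pder, ← Function.comp_def, (hφ.comp_hasFDerivAt y hg.hasFDerivAt).fderiv]

lemma pder_rpow (i : Fin n) (e : ℝ) (hg : DifferentiableAt ℝ g y) (hy : g y ≠ 0) :
    pder i (fun z => g z ^ e) y = e * g y ^ (e - 1) * pder i g y :=
  pder_comp i (Real.hasDerivAt_rpow_const (Or.inl hy)) hg

lemma Filter.EventuallyEq.pder_eq (i : Fin n) (hgh : g =ᶠ[𝓝 y] h) : pder i g y = pder i h y := by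
  rw [pder, pder, hgh.fderiv_eq]

lemma contDiffAt_pder {m : ℕ} (hu : ContDiffAt ℝ (m + 1) u y) (i : Fin n) :
    ContDiffAt ℝ m (pder i u) y :=
  (hu.fderiv_right le_rfl).clm_apply contDiffAt_const

lemma differentiableAt_pder (hu : ContDiffAt ℝ 2 u y) (i : Fin n) :
    DifferentiableAt ℝ (pder i u) y :=
  (contDiffAt_pder (m := 1) hu i).differentiableAt one_ne_zero

lemma differentiableAt_pder2 (hu : ContDiffAt ℝ 3 u y) (i j : Fin n) :
    DifferentiableAt ℝ (pder2 i j u) y :=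
  differentiableAt_pder (contDiffAt_pder (m := 2) hu j) i

lemma pder2_comm (hu : ContDiffAt ℝ 2 u y) (i j : Fin n) : pder2 i j u y = pder2 j i u y := by
  have hd : DifferentiableAt ℝ (fderiv ℝ u) y :=
    (hu.fderiv_right (m := 1) le_rfl).differentiableAt one_ne_zero
  have key : ∀ a b : Fin n, pder2 a b u y
      = fderiv ℝ (fderiv ℝ u) y (EuclideanSpace.single a 1) (EuclideanSpace.single b 1) := by
    intro a b
    simp [pder2, pder, fderiv_clm_apply hd (differentiableAt_const _)]
  rw [key, key]
  exact hu.isSymmSndFDerivAt (by simp) _ _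

lemma pder_pder2_comm (hu : ContDiffAt ℝ 3 u y) (i k : Fin n) :
    pder i (pder2 i k u) y = pder k (pder2 i i u) y := by
  have hsymm : pder2 i k u =ᶠ[𝓝 y] pder2 k i u := by
    filter_upwards [hu.eventually (by simp)] with z hz
    exact pder2_comm (hz.of_le (by norm_num)) i k
  rw [hsymm.pder_eq]
  exact pder2_comm (contDiffAt_pder (m := 2) hu i) i k

end PartialDerivatives

section GradientQuantities

variable {n : ℕ} {u : EuclideanSpace ℝ (Fin n) → ℝ} {y : EuclideanSpace ℝ (Fin n)}

def gradSq (u : EuclideanSpace ℝ (Fin n) → ℝ) (y : EuclideanSpace ℝ (Fin n)) : ℝ :=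
  ∑ i, pder i u y ^ 2

def hessGrad (i : Fin n) (u : EuclideanSpace ℝ (Fin n) → ℝ) (y : EuclideanSpace ℝ (Fin n)) : ℝ :=
  ∑ k, pder k u y * pder2 i k u y

def hessQuad (u : EuclideanSpace ℝ (Fin n) → ℝ) (y : EuclideanSpace ℝ (Fin n)) : ℝ :=
  ∑ i, hessGrad i u y * pder i u y

def coordLaplacian (u : EuclideanSpace ℝ (Fin n) → ℝ) (y : EuclideanSpace ℝ (Fin n)) : ℝ :=
  ∑ i, pder2 i i u y

def gradInner (φ u : EuclideanSpace ℝ (Fin n) → ℝ) (y : EuclideanSpace ℝ (Fin n)) : ℝ :=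
  ∑ i, pder i φ y * pder i u y

def hessNormSq (u : EuclideanSpace ℝ (Fin n) → ℝ) (y : EuclideanSpace ℝ (Fin n)) : ℝ :=
  ∑ i, ∑ k, pder2 k i u y ^ 2

def hessGradNormSq (u : EuclideanSpace ℝ (Fin n) → ℝ) (y : EuclideanSpace ℝ (Fin n)) : ℝ :=
  ∑ i, hessGrad i u y ^ 2

lemma gradient_apply_eq_pder (i : Fin n) : gradient u y i = pder i u y := by
  rw [pder, ← InnerProductSpace.toDual_symm_apply, EuclideanSpace.inner_single_right]
  simp [gradient]

lemma gradSq_eq_norm_sq : gradSq u y = ‖gradient u y‖ ^ 2 := by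
  simp [gradSq, EuclideanSpace.norm_sq_eq, gradient_apply_eq_pder]

lemma gradSq_rpow_half (e : ℝ) : gradSq u y ^ (e / 2) = ‖gradient u y‖ ^ e := by
  rw [gradSq_eq_norm_sq, ← Real.rpow_natCast, ← Real.rpow_mul (norm_nonneg _)]
  norm_num [mul_div_cancel₀]

end GradientQuantities

section GradientCalculus

variable {n : ℕ} {u : EuclideanSpace ℝ (Fin n) → ℝ} {y : EuclideanSpace ℝ (Fin n)}

lemma gradSq_eq_sum_mul : gradSq u = fun z => ∑ i, pder i u z * pder i u z := by
  funext z
  simp only [gradSq, sq]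

lemma differentiableAt_gradSq (hu : ContDiffAt ℝ 2 u y) : DifferentiableAt ℝ (gradSq u) y := by
  have hd := differentiableAt_pder hu
  rw [gradSq_eq_sum_mul]
  exact DifferentiableAt.fun_sum fun i _ => (hd i).fun_mul (hd i)

lemma pder_gradSq (hu : ContDiffAt ℝ 2 u y) (j : Fin n) :
    pder j (gradSq u) y = 2 * hessGrad j u y := by
  have hd := differentiableAt_pder hu
  rw [gradSq_eq_sum_mul, pder_sum j _ fun i _ => (hd i).fun_mul (hd i), hessGrad, Finset.mul_sum]
  refine Finset.sum_congr rfl fun k _ => ?_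
  rw [pder_mul j (hd k) (hd k)]
  change pder2 j k u y * _ + _ * pder2 j k u y = _
  ring

lemma differentiableAt_gradSq_rpow (hu : ContDiffAt ℝ 2 u y) (hw : gradSq u y ≠ 0) (e : ℝ) :
    DifferentiableAt ℝ (fun z => gradSq u z ^ e) y :=
  (differentiableAt_gradSq hu).rpow_const (Or.inl hw)

lemma pder_gradSq_rpow (hu : ContDiffAt ℝ 2 u y) (hw : gradSq u y ≠ 0) (e : ℝ) (j : Fin n) :
    pder j (fun z => gradSq u z ^ e) y = 2 * e * gradSq u y ^ (e - 1) * hessGrad j u y := by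
  rw [pder_rpow j e (differentiableAt_gradSq hu) hw, pder_gradSq hu]
  ring

lemma differentiableAt_hessGrad (hu : ContDiffAt ℝ 3 u y) (i : Fin n) :
    DifferentiableAt ℝ (hessGrad i u) y := by
  have hd := differentiableAt_pder (hu.of_le (by norm_num))
  have hd2 := differentiableAt_pder2 hu
  exact DifferentiableAt.fun_sum fun k _ => (hd k).fun_mul (hd2 i k)

lemma pder_hessGrad (hu : ContDiffAt ℝ 3 u y) (i j : Fin n) :
    pder i (hessGrad j u) y
      = ∑ k, (pder2 i k u y * pder2 j k u y + pder k u y * pder i (pder2 j k u) y) := by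
  have hd := differentiableAt_pder (hu.of_le (by norm_num))
  have hd2 := differentiableAt_pder2 hu
  unfold hessGrad
  rw [pder_sum i _ fun k _ => (hd k).fun_mul (hd2 j k)]
  exact Finset.sum_congr rfl fun k _ => pder_mul i (hd k) (hd2 j k)

lemma differentiableAt_hessQuad (hu : ContDiffAt ℝ 3 u y) :
    DifferentiableAt ℝ (hessQuad u) y := by
  have hd := differentiableAt_pder (hu.of_le (by norm_num))
  have hg := differentiableAt_hessGrad hu
  exact DifferentiableAt.fun_sum fun i _ => (hg i).fun_mul (hd i)

lemma differentiableAt_coordLaplacian (hu : ContDiffAt ℝ 3 u y) :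
    DifferentiableAt ℝ (coordLaplacian u) y := by
  have hd2 := differentiableAt_pder2 hu
  exact DifferentiableAt.fun_sum fun i _ => hd2 i i

lemma sum_mul_pder2_eq_hessGrad (hu : ContDiffAt ℝ 2 u y) (j : Fin n) :
    ∑ i, pder i u y * pder2 i j u y = hessGrad j u y :=
  Finset.sum_congr rfl fun i _ => by rw [pder2_comm hu]

/-- Bochner's formula in flat space: `½ Δ|∇u|² = |D²u|² + ⟨∇u, ∇Δu⟩`. -/
lemma sum_pder_hessGrad (hu : ContDiffAt ℝ 3 u y) :
    ∑ i, pder i (hessGrad i u) y = hessNormSq u y + gradInner (coordLaplacian u) u y := by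
  have hd2 := differentiableAt_pder2 hu
  have hlap : ∀ k, ∑ i, pder i (pder2 i k u) y = pder k (coordLaplacian u) y := fun k => by
    rw [show coordLaplacian u = fun z => ∑ i, pder2 i i u z from rfl,
      pder_sum k _ fun i _ => hd2 i i]
    exact Finset.sum_congr rfl fun i _ => pder_pder2_comm hu i k
  simp only [pder_hessGrad hu, Finset.sum_add_distrib]
  rw [hessNormSq, gradInner, Finset.sum_comm (f := fun i k => pder k u y * _)]
  congr 1
  · rw [Finset.sum_comm]
    simp only [sq]
  · simp only [← Finset.mul_sum, hlap, mul_comm]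

lemma sum_sum_mul_pder_hessGrad (hu : ContDiffAt ℝ 3 u y) :
    ∑ i, ∑ j, pder i u y * pder j u y * pder i (hessGrad j u) y
      = gradInner (hessQuad u) u y - hessGradNormSq u y := by
  have hd := differentiableAt_pder (hu.of_le (by norm_num))
  have hg := differentiableAt_hessGrad hu
  have hB : ∀ i, pder i (hessQuad u) y
      = ∑ j, (pder i (hessGrad j u) y * pder j u y + hessGrad j u y * pder2 i j u y) := fun i => by
    rw [show hessQuad u = fun z => ∑ j, hessGrad j u z * pder j u z from rfl,
      pder_sum i _ fun j _ => (hg j).fun_mul (hd j)]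
    exact Finset.sum_congr rfl fun j _ => pder_mul i (hg j) (hd j)
  have hE : ∑ i, ∑ j, hessGrad j u y * pder2 i j u y * pder i u y = hessGradNormSq u y := by
    rw [Finset.sum_comm, hessGradNormSq]
    refine Finset.sum_congr rfl fun j _ => ?_
    rw [sq, ← sum_mul_pder2_eq_hessGrad (hu.of_le (by norm_num)) j, Finset.mul_sum]
    exact Finset.sum_congr rfl fun i _ => by ring
  rw [gradInner, eq_sub_iff_add_eq, ← hE, ← Finset.sum_add_distrib]
  refine Finset.sum_congr rfl fun i _ => ?_
  rw [hB, Finset.sum_mul, ← Finset.sum_add_distrib]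
  exact Finset.sum_congr rfl fun j _ => by ring

end GradientCalculus

section PLaplaceEquation

variable {n : ℕ} {p f' : ℝ} {f F : ℝ → ℝ} {u : EuclideanSpace ℝ (Fin n) → ℝ}
  {x y : EuclideanSpace ℝ (Fin n)}

lemma eventually_contDiffAt_and_gradSq_ne_zero (hu : ContDiffAt ℝ 3 u x) (hw : gradSq u x ≠ 0) :
    ∀ᶠ y in 𝓝 x, ContDiffAt ℝ 2 u y ∧ gradSq u y ≠ 0 :=
  ((hu.eventually (by simp)).mono fun _ hy => hy.of_le (by norm_num)).and
    ((differentiableAt_gradSq (hu.of_le (by norm_num))).continuousAt.eventually_ne hw)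

lemma pLaplacian_eq (hu : ContDiffAt ℝ 2 u y) (hw : gradSq u y ≠ 0) :
    pLaplacian p u y = (p - 2) * gradSq u y ^ ((p - 4) / 2) * hessQuad u y
      + gradSq u y ^ ((p - 2) / 2) * coordLaplacian u y := by
  have hd := differentiableAt_pder hu
  have hA := differentiableAt_gradSq_rpow hu hw ((p - 2) / 2)
  have hterm : ∀ i, fderiv ℝ (fun z => ‖gradient u z‖ ^ (p - 2) * gradient u z i) y
      (EuclideanSpace.single i 1)
      = (p - 2) * gradSq u y ^ ((p - 4) / 2) * (hessGrad i u y * pder i u y)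
        + gradSq u y ^ ((p - 2) / 2) * pder2 i i u y := fun i => by
    simp only [← gradSq_rpow_half, gradient_apply_eq_pder]
    rw [← pder, pder_mul i hA (hd i), pder_gradSq_rpow hu hw,
      show (p - 2) / 2 - 1 = (p - 4) / 2 by ring]
    change _ + _ * pder2 i i u y = _
    ring
  simp only [pLaplacian, hterm, Finset.sum_add_distrib, ← Finset.mul_sum, hessQuad, coordLaplacian]

lemma gradInner_pLaplacian (hu : ContDiffAt ℝ 3 u x) (hw : gradSq u x ≠ 0) :
    gradInner (pLaplacian p u) u x
      = (p - 2) * ((p - 4) * gradSq u x ^ ((p - 6) / 2) * hessQuad u x ^ 2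
          + gradSq u x ^ ((p - 4) / 2) * gradInner (hessQuad u) u x)
        + (p - 2) * gradSq u x ^ ((p - 4) / 2) * hessQuad u x * coordLaplacian u x
        + gradSq u x ^ ((p - 2) / 2) * gradInner (coordLaplacian u) u x := by
  have hu2 : ContDiffAt ℝ 2 u x := hu.of_le (by norm_num)
  have hA := differentiableAt_gradSq_rpow hu2 hw
  have hB := differentiableAt_hessQuad hu
  have hT := differentiableAt_coordLaplacian hu
  have hev : pLaplacian p u =ᶠ[𝓝 x] fun y => (p - 2) * gradSq u y ^ ((p - 4) / 2) * hessQuad u y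
      + gradSq u y ^ ((p - 2) / 2) * coordLaplacian u y := by
    filter_upwards [eventually_contDiffAt_and_gradSq_ne_zero hu hw] with y hy
    exact pLaplacian_eq hy.1 hy.2
  have hterm : ∀ i, pder i (pLaplacian p u) x * pder i u x
      = (p - 2) * (p - 4) * gradSq u x ^ ((p - 6) / 2) * hessQuad u x
          * (hessGrad i u x * pder i u x)
        + (p - 2) * gradSq u x ^ ((p - 4) / 2) * (pder i (hessQuad u) x * pder i u x)
        + (p - 2) * gradSq u x ^ ((p - 4) / 2) * coordLaplacian u x
          * (hessGrad i u x * pder i u x)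
        + gradSq u x ^ ((p - 2) / 2) * (pder i (coordLaplacian u) x * pder i u x) := fun i => by
    rw [hev.pder_eq, pder_add i (((hA _).const_mul _).fun_mul hB) ((hA _).fun_mul hT),
      pder_mul i ((hA _).const_mul _) hB, pder_const_mul i _ (hA _), pder_mul i (hA _) hT,
      pder_gradSq_rpow hu2 hw, pder_gradSq_rpow hu2 hw, show (p - 4) / 2 - 1 = (p - 6) / 2 by ring,
      show (p - 2) / 2 - 1 = (p - 4) / 2 by ring]
    ring
  simp only [gradInner, hterm, Finset.sum_add_distrib, ← Finset.mul_sum]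
  rw [← hessQuad]
  ring

lemma gradInner_pLaplacian_of_eq (hf : HasDerivAt f f' (u x)) (hu : DifferentiableAt ℝ u x)
    (heq : ∀ᶠ y in 𝓝 x, pLaplacian p u y + f (u y) = 0) :
    gradInner (pLaplacian p u) u x = -f' * gradSq u x := by
  have hev : pLaplacian p u =ᶠ[𝓝 x] fun y => -f (u y) :=
    heq.mono fun y hy => eq_neg_of_add_eq_zero_left hy
  simp only [gradInner, hev.pder_eq, pder_comp _ hf.fun_neg hu, gradSq, Finset.mul_sum]
  exact Finset.sum_congr rfl fun i _ => by ring

end PLaplaceEquation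

section QFunction

variable {n : ℕ} {p f' : ℝ} {f F : ℝ → ℝ} {u : EuclideanSpace ℝ (Fin n) → ℝ}
  {x y : EuclideanSpace ℝ (Fin n)}

lemma Qfun_eq_gradSq_rpow :
    Qfun p F u = fun y => (p - 1) / p * gradSq u y ^ (p / 2) + F (u y) := by
  funext y
  rw [Qfun, gradSq_rpow_half]

lemma pder_Qfun (hp : p ≠ 0) (hF : IsPrimitive F f) (hu : ContDiffAt ℝ 2 u y)
    (hw : gradSq u y ≠ 0) (i : Fin n) :
    pder i (Qfun p F u) y
      = (p - 1) * gradSq u y ^ ((p - 2) / 2) * hessGrad i u y + f (u y) * pder i u y := by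
  have hud : DifferentiableAt ℝ u y := hu.differentiableAt (by norm_num)
  have hA := differentiableAt_gradSq_rpow hu hw (p / 2)
  have hFu : DifferentiableAt ℝ (fun z => F (u z)) y := (hF (u y)).differentiableAt.comp y hud
  rw [Qfun_eq_gradSq_rpow, pder_add i (hA.const_mul _) hFu,
    pder_const_mul i _ hA, pder_gradSq_rpow hu hw, pder_comp i (hF (u y)) hud,
    show p / 2 - 1 = (p - 2) / 2 by ring]
  field_simp

lemma gradInner_Qfun (hp : p ≠ 0) (hF : IsPrimitive F f) (hu : ContDiffAt ℝ 2 u y)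
    (hw : gradSq u y ≠ 0) :
    gradInner (Qfun p F u) u y
      = (p - 1) * gradSq u y ^ ((p - 2) / 2) * hessQuad u y + f (u y) * gradSq u y := by
  simp only [gradInner, pder_Qfun hp hF hu hw, add_mul, Finset.sum_add_distrib, mul_assoc,
    ← Finset.mul_sum, hessQuad, gradSq, sq]

lemma pder2_Qfun (hp : p ≠ 0) (hF : IsPrimitive F f) (hf : HasDerivAt f f' (u x))
    (hu : ContDiffAt ℝ 3 u x) (hw : gradSq u x ≠ 0) (i j : Fin n) :
    pder2 i j (Qfun p F u) x
      = (p - 1) * ((p - 2) * gradSq u x ^ ((p - 4) / 2) * hessGrad i u x * hessGrad j u x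
          + gradSq u x ^ ((p - 2) / 2) * pder i (hessGrad j u) x)
        + f' * pder i u x * pder j u x + f (u x) * pder2 i j u x := by
  have hu2 : ContDiffAt ℝ 2 u x := hu.of_le (by norm_num)
  have hud : DifferentiableAt ℝ u x := hu.differentiableAt (by norm_num)
  have hA := differentiableAt_gradSq_rpow hu2 hw ((p - 2) / 2)
  have hg := differentiableAt_hessGrad hu j
  have hd := differentiableAt_pder hu2 j
  have hfu : DifferentiableAt ℝ (fun z => f (u z)) x := hf.differentiableAt.comp x hud
  have hev : pder j (Qfun p F u) =ᶠ[𝓝 x] fun y =>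
      (p - 1) * gradSq u y ^ ((p - 2) / 2) * hessGrad j u y + f (u y) * pder j u y := by
    filter_upwards [eventually_contDiffAt_and_gradSq_ne_zero hu hw] with y hy
    exact pder_Qfun hp hF hy.1 hy.2 j
  change pder i (pder j (Qfun p F u)) x = _
  rw [hev.pder_eq, pder_add i ((hA.const_mul _).fun_mul hg) (hfu.fun_mul hd),
    pder_mul i (hA.const_mul _) hg, pder_const_mul i _ hA, pder_gradSq_rpow hu2 hw,
    pder_mul i hfu hd, pder_comp i hf hud,
    show (p - 2) / 2 - 1 = (p - 4) / 2 by ring]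
  change _ = _ + _ * pder i (pder j u) x
  ring

lemma sum_pder2_Qfun (hp : p ≠ 0) (hF : IsPrimitive F f) (hf : HasDerivAt f f' (u x))
    (hu : ContDiffAt ℝ 3 u x) (hw : gradSq u x ≠ 0) :
    ∑ i, pder2 i i (Qfun p F u) x
      = (p - 1) * ((p - 2) * gradSq u x ^ ((p - 4) / 2) * hessGradNormSq u x
          + gradSq u x ^ ((p - 2) / 2) * (hessNormSq u x + gradInner (coordLaplacian u) u x))
        + f' * gradSq u x + f (u x) * coordLaplacian u x := by
  have hterm : ∀ i, pder2 i i (Qfun p F u) x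
      = (p - 1) * (p - 2) * gradSq u x ^ ((p - 4) / 2) * hessGrad i u x ^ 2
        + (p - 1) * gradSq u x ^ ((p - 2) / 2) * pder i (hessGrad i u) x
        + f' * pder i u x ^ 2 + f (u x) * pder2 i i u x := fun i => by
    rw [pder2_Qfun hp hF hf hu hw]
    ring
  simp only [hterm, Finset.sum_add_distrib, ← Finset.mul_sum, sum_pder_hessGrad hu]
  simp only [hessGradNormSq, gradSq, coordLaplacian]
  ring

lemma sum_sum_mul_pder2_Qfun (hp : p ≠ 0) (hF : IsPrimitive F f) (hf : HasDerivAt f f' (u x))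
    (hu : ContDiffAt ℝ 3 u x) (hw : gradSq u x ≠ 0) :
    ∑ i, ∑ j, pder i u x * pder j u x * pder2 i j (Qfun p F u) x
      = (p - 1) * ((p - 2) * gradSq u x ^ ((p - 4) / 2) * hessQuad u x ^ 2
          + gradSq u x ^ ((p - 2) / 2) * (gradInner (hessQuad u) u x - hessGradNormSq u x))
        + f' * gradSq u x ^ 2 + f (u x) * hessQuad u x := by
  have hterm : ∀ i j, pder i u x * pder j u x * pder2 i j (Qfun p F u) x
      = (p - 1) * (p - 2) * gradSq u x ^ ((p - 4) / 2)
          * ((hessGrad i u x * pder i u x) * (hessGrad j u x * pder j u x))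
        + (p - 1) * gradSq u x ^ ((p - 2) / 2)
          * (pder i u x * pder j u x * pder i (hessGrad j u) x)
        + f' * (pder i u x ^ 2 * pder j u x ^ 2)
        + f (u x) * (pder i u x * (pder j u x * pder2 i j u x)) := fun i j => by
    rw [pder2_Qfun hp hF hf hu hw]
    ring
  have hB : ∑ i, pder i u x * ∑ j, pder j u x * pder2 i j u x = hessQuad u x :=
    Finset.sum_congr rfl fun i _ => mul_comm _ _
  have hB' : ∑ i, hessGrad i u x * pder i u x = hessQuad u x := rfl
  have hW : ∑ i, pder i u x ^ 2 = gradSq u x := rfl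
  simp only [hterm, Finset.sum_add_distrib, ← Finset.mul_sum, ← Finset.sum_mul,
    sum_sum_mul_pder_hessGrad hu, hB, hB', hW]
  ring

end QFunction

lemma Qfun_identity_algebraic {p N B T E S R P f₀ f₁ : ℝ} (hp : p ≠ 1) (hN : 0 < N)
    (hpde : (p - 2) * N ^ (p - 4) * B + N ^ (p - 2) * T + f₀ = 0)
    (hdpde : (p - 2) * ((p - 4) * N ^ (p - 6) * B ^ 2 + N ^ (p - 4) * R)
        + (p - 2) * N ^ (p - 4) * B * T + N ^ (p - 2) * P = -f₁ * N ^ 2) :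
    1 / (p - 1) * ((p - 1) * ((p - 2) * N ^ (p - 4) * E + N ^ (p - 2) * (S + P))
        + f₁ * N ^ 2 + f₀ * T)
      + (p - 2) / ((p - 1) * N ^ 2) * ((p - 1) * ((p - 2) * N ^ (p - 4) * B ^ 2
        + N ^ (p - 2) * (R - E)) + f₁ * (N ^ 2) ^ 2 + f₀ * B)
    = N ^ (p - 2) * S
      + p * (p - 2) * ((p - 1) * N ^ (p - 2) * B + f₀ * N ^ 2) ^ 2
          / ((p - 1) ^ 2 * N ^ (p + 2))
      - (p - 2) * (p + 1) * f₀ * ((p - 1) * N ^ (p - 2) * B + f₀ * N ^ 2)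
          / ((p - 1) ^ 2 * N ^ p)
      - f₀ ^ 2 / ((p - 1) ^ 2 * N ^ (p - 2)) := by
  -- `N ^ (p - 6)` is the lowest power involved; as a multiple of it every other one is polynomial.
  have hshift : ∀ k : ℕ, ∀ a, p - 6 + k = a → N ^ a = N ^ (p - 6) * N ^ k := by
    rintro k a rfl
    rw [Real.rpow_add hN, Real.rpow_natCast]
  rw [hshift 2 (p - 4) (by push_cast; ring), hshift 4 (p - 2) (by push_cast; ring)] at hpde hdpde ⊢
  rw [hshift 6 p (by push_cast; ring), hshift 8 (p + 2) (by push_cast; ring)]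
  have hb : 0 < N ^ (p - 6) := Real.rpow_pos_of_pos hN _
  set b := N ^ (p - 6)
  have hT : T = (-f₀ - (p - 2) * (b * N ^ 2) * B) / (b * N ^ 4) := by
    rw [eq_div_iff (by positivity)]; linear_combination hpde
  have hP : P = (-f₁ * N ^ 2 - (p - 2) * ((p - 4) * b * B ^ 2 + b * N ^ 2 * R)
      - (p - 2) * (b * N ^ 2) * B * T) / (b * N ^ 4) := by
    rw [eq_div_iff (by positivity)]; linear_combination hdpde
  have hp1 : p - 1 ≠ 0 := sub_ne_zero.2 hp
  rw [hP, hT]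
  field_simp
  ring

/-- the identity for the elliptic operator applied to Q (equation (2.10)
after the substitutions (2.11)). -/
theorem statement_10 (n : ℕ) (p : ℝ) (hp : 1 < p)
    (Ω : Set (EuclideanSpace ℝ (Fin n))) (hΩ : IsOpen Ω)
    (f : ℝ → ℝ) (hf : ContDiff ℝ 1 f)
    (u : EuclideanSpace ℝ (Fin n) → ℝ) (hu : ContDiffOn ℝ 3 u Ω)
    (heq : ∀ x ∈ Ω, pLaplacian p u x + f (u x) = 0)
    (F : ℝ → ℝ) (hFf : IsPrimitive F f)
    (x : EuclideanSpace ℝ (Fin n)) (hx : x ∈ Ω) (hgrad : gradient u x ≠ 0) :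
    1 / (p - 1) * (∑ i : Fin n, pder2 i i (Qfun p F u) x)
      + (p - 2) / ((p - 1) * ‖gradient u x‖ ^ 2) *
          (∑ i : Fin n, ∑ j : Fin n,
            pder i u x * pder j u x * pder2 i j (Qfun p F u) x)
    = ‖gradient u x‖ ^ (p - 2) *
        (∑ i : Fin n, ∑ k : Fin n, (pder2 k i u x) ^ 2)
      + p * (p - 2) * (∑ i : Fin n, pder i (Qfun p F u) x * pder i u x) ^ 2 /
          ((p - 1) ^ 2 * ‖gradient u x‖ ^ (p + 2))
      - (p - 2) * (p + 1) * f (u x) *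
          (∑ i : Fin n, pder i (Qfun p F u) x * pder i u x) /
          ((p - 1) ^ 2 * ‖gradient u x‖ ^ p)
      - f (u x) ^ 2 / ((p - 1) ^ 2 * ‖gradient u x‖ ^ (p - 2)) := by
  have hp0 : p ≠ 0 := by linarith
  have hu3 : ContDiffAt ℝ 3 u x := hu.contDiffAt (hΩ.mem_nhds hx)
  have hu2 : ContDiffAt ℝ 2 u x := hu3.of_le (by norm_num)
  have hN : 0 < ‖gradient u x‖ := norm_pos_iff.2 hgrad
  have hw : gradSq u x ≠ 0 := by rw [gradSq_eq_norm_sq]; positivity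
  have hfx : HasDerivAt f (deriv f (u x)) (u x) :=
    (hf.differentiable one_ne_zero (u x)).hasDerivAt
  have hpde := heq x hx
  rw [pLaplacian_eq hu2 hw] at hpde
  have hdpde := (gradInner_pLaplacian (p := p) hu3 hw).symm.trans
    (gradInner_pLaplacian_of_eq hfx (hu2.differentiableAt (by norm_num))
      (eventually_of_mem (hΩ.mem_nhds hx) heq))
  rw [sum_pder2_Qfun hp0 hFf hfx hu3 hw, sum_sum_mul_pder2_Qfun hp0 hFf hfx hu3 hw]
  rw [show ∑ i, ∑ k, pder2 k i u x ^ 2 = hessNormSq u x from rfl,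
    show ∑ i, pder i (Qfun p F u) x * pder i u x = gradInner (Qfun p F u) u x from rfl,
    gradInner_Qfun hp0 hFf hu2 hw]
  simp only [gradSq_rpow_half] at hpde hdpde ⊢
  rw [gradSq_eq_norm_sq] at hdpde ⊢
  exact Qfun_identity_algebraic hp.ne' hN hpde hdpde
end
end

section
/- Let 1 < p < ∞, let U ⊂ ℝⁿ be open, and let v ∈ C³(U) satisfy div(|∇v|^{p−2}∇v) = 0 and ∇v(x) ≠ 0 for all x ∈ U. Set a^{ij} = δ^{ij} + (p−2) v_i v_j/|∇v|² and A^{ij} = |∇v|^{p−2} a^{ij}. Then (Einstein summation) ∂_i ( a^{ij} ∂_j (|∇v|^p) ) = p · A^{ij} Σ_k v_{kj} v_{ki} ≥ 0 in U; in particular, |∇v|^p is a subsolution of the uniformly elliptic operator w ↦ ∂_i(a^{ij} ∂_j w). -/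
open Set Filter
open scoped BigOperators Topology

noncomputable section

/-- The coefficient matrix a^{ij} = δ^{ij} + (p-2) v_i v_j / |∇v|². -/
def aCoef {n : ℕ} (p : ℝ) (v : EuclideanSpace ℝ (Fin n) → ℝ) (y : EuclideanSpace ℝ (Fin n)) (i j : Fin n) : ℝ :=
  (if i = j then (1 : ℝ) else 0) + (p - 2) * pder i v y * pder j v y / ‖gradient v y‖ ^ 2

/-- The coefficient matrix A^{ij} = |∇v|^{p-2} a^{ij}. -/
def ACoef {n : ℕ} (p : ℝ) (v : EuclideanSpace ℝ (Fin n) → ℝ) (y : EuclideanSpace ℝ (Fin n)) (i j : Fin n) : ℝ :=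
  ‖gradient v y‖ ^ (p - 2) * aCoef p v y i j

/-!
Write `Φᵢ = |∇v|^{p-2} vᵢ` for the components of the flux, so that `Δ_p v = ∂ᵢΦᵢ`.
Differentiating `Φᵢ` gives the linearisation `∂ₖΦᵢ = A^{ij} v_{kj}`, and with the symmetry of the
Hessian this turns the inner expression into `a^{ij} ∂ⱼ|∇v|^p = p vₖ ∂ₖΦᵢ`. Taking `∂ᵢ`, the
third-order term `vₖ ∂ₖ(∂ᵢΦᵢ) = vₖ ∂ₖ(Δ_p v)` vanishes, leaving
`p v_{ik} ∂ₖΦᵢ = p A^{ij} v_{kj} v_{ki}`. This is a sum over `k` of the quadratic form of `A` at the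
rows of the Hessian, and that form is nonnegative since
`|ξ|² + (p-2)(∇v·ξ)²/|∇v|² ≥ min(1, p-1)|ξ|²` by Cauchy–Schwarz.
-/

namespace PLaplacian

variable {n : ℕ} {u v : EuclideanSpace ℝ (Fin n) → ℝ} {x y : EuclideanSpace ℝ (Fin n)}

theorem gradient_apply_eq_pder (u : EuclideanSpace ℝ (Fin n) → ℝ) (y : EuclideanSpace ℝ (Fin n))
    (i : Fin n) : gradient u y i = pder i u y := by
  have h : inner ℝ (gradient u y) (EuclideanSpace.single i (1 : ℝ))
      = fderiv ℝ u y (EuclideanSpace.single i 1) := InnerProductSpace.toDual_symm_apply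
  rwa [EuclideanSpace.inner_single_right, conj_trivial, one_mul] at h

theorem norm_gradient_sq (u : EuclideanSpace ℝ (Fin n) → ℝ) (y : EuclideanSpace ℝ (Fin n)) :
    ‖gradient u y‖ ^ 2 = ∑ k, pder k u y ^ 2 := by
  simp [EuclideanSpace.norm_sq_eq, gradient_apply_eq_pder]

theorem norm_gradient_rpow (u : EuclideanSpace ℝ (Fin n) → ℝ) (y : EuclideanSpace ℝ (Fin n))
    (q : ℝ) : ‖gradient u y‖ ^ q = (∑ k, pder k u y ^ 2) ^ (q / 2) := by
  rw [← norm_gradient_sq, ← Real.rpow_natCast, ← Real.rpow_mul (norm_nonneg _)]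
  push_cast
  ring_nf

theorem pder2_eq_fderiv_fderiv (hu : DifferentiableAt ℝ (fderiv ℝ u) y) (i j : Fin n) :
    pder2 i j u y
      = fderiv ℝ (fderiv ℝ u) y (EuclideanSpace.single i 1) (EuclideanSpace.single j 1) := by
  simp [pder2, pder, fderiv_clm_apply hu (differentiableAt_const _)]

theorem pder2_comm (hu : ContDiffAt ℝ 2 u y) (i j : Fin n) : pder2 i j u y = pder2 j i u y := by
  have hdiff : DifferentiableAt ℝ (fderiv ℝ u) y :=
    (hu.fderiv_right (m := 1) le_rfl).differentiableAt one_ne_zero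
  rw [pder2_eq_fderiv_fderiv hdiff, pder2_eq_fderiv_fderiv hdiff]
  exact hu.isSymmSndFDerivAt (by simp) _ _

theorem contDiffAt_pder {m : ℕ} (hu : ContDiffAt ℝ (m + 1) u y) (i : Fin n) :
    ContDiffAt ℝ m (pder i u) y :=
  (hu.fderiv_right le_rfl).clm_apply contDiffAt_const

theorem differentiableAt_pder (hu : ContDiffAt ℝ 2 u y) (i : Fin n) :
    DifferentiableAt ℝ (pder i u) y :=
  (contDiffAt_pder (m := 1) hu i).differentiableAt one_ne_zero

theorem pder_mul {f g : EuclideanSpace ℝ (Fin n) → ℝ} (hf : DifferentiableAt ℝ f y)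
    (hg : DifferentiableAt ℝ g y) (k : Fin n) :
    pder k (fun z => f z * g z) y = pder k f y * g y + f y * pder k g y := by
  simp only [pder, fderiv_fun_mul hf hg, add_apply, smul_apply, smul_eq_mul]
  ring

theorem sum_sq_pder_pos (hg : gradient v y ≠ 0) : 0 < ∑ k, pder k v y ^ 2 := by
  rw [← norm_gradient_sq]
  exact pow_pos (norm_pos_iff.2 hg) 2

theorem contDiffAt_norm_gradient_rpow {m : ℕ} (hv : ContDiffAt ℝ (m + 1) v y)
    (hg : gradient v y ≠ 0) (q : ℝ) : ContDiffAt ℝ m (fun z => ‖gradient v z‖ ^ q) y := by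
  simp only [norm_gradient_rpow]
  exact (ContDiffAt.sum fun k _ => (contDiffAt_pder hv k).pow 2).rpow_const_of_ne
    (sum_sq_pder_pos hg).ne'

theorem pder_norm_gradient_rpow (hv : ContDiffAt ℝ 2 v y) (hg : gradient v y ≠ 0) (q : ℝ)
    (j : Fin n) :
    pder j (fun z => ‖gradient v z‖ ^ q) y
      = q * ‖gradient v y‖ ^ (q - 2) * ∑ k, pder k v y * pder2 j k v y := by
  have hW : HasFDerivAt (fun z => ∑ k, pder k v z ^ 2)
      (∑ k, (2 * pder k v y) • fderiv ℝ (pder k v) y) y :=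
    HasFDerivAt.fun_sum fun k _ => by
      simpa using (differentiableAt_pder hv k).hasFDerivAt.pow 2
  have hrpow := hW.rpow_const (p := q / 2) (Or.inl (sum_sq_pder_pos hg).ne')
  simp only [norm_gradient_rpow]
  rw [pder, hrpow.fderiv]
  simp only [FunLike.coe_smul, FunLike.coe_sum, Pi.smul_apply, Finset.sum_apply, smul_eq_mul,
    Finset.mul_sum]
  refine Finset.sum_congr rfl fun k _ => ?_
  rw [show q / 2 - 1 = (q - 2) / 2 by ring]
  simp only [pder2]
  ring

def flux (p : ℝ) (v : EuclideanSpace ℝ (Fin n) → ℝ) (i : Fin n) (y : EuclideanSpace ℝ (Fin n)) :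
    ℝ :=
  ‖gradient v y‖ ^ (p - 2) * gradient v y i

theorem pLaplacian_eq_sum_pder_flux (p : ℝ) (v : EuclideanSpace ℝ (Fin n) → ℝ) :
    pLaplacian p v = fun x => ∑ i, pder i (flux p v i) x :=
  rfl

theorem flux_eq (p : ℝ) (v : EuclideanSpace ℝ (Fin n) → ℝ) (i : Fin n) :
    flux p v i = fun z => ‖gradient v z‖ ^ (p - 2) * pder i v z := by
  funext z
  rw [flux, gradient_apply_eq_pder]

theorem contDiffAt_flux {p : ℝ} (hv : ContDiffAt ℝ 3 v y) (hg : gradient v y ≠ 0) (i : Fin n) :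
    ContDiffAt ℝ 2 (flux p v i) y := by
  rw [flux_eq]
  exact (contDiffAt_norm_gradient_rpow hv hg _).mul (contDiffAt_pder hv i)

theorem pder_flux {p : ℝ} (hv : ContDiffAt ℝ 2 v y) (hg : gradient v y ≠ 0) (i k : Fin n) :
    pder k (flux p v i) y = ∑ j, ACoef p v y i j * pder2 k j v y := by
  have hN : ‖gradient v y‖ ^ (p - 2 - 2) = ‖gradient v y‖ ^ (p - 2) / ‖gradient v y‖ ^ 2 := by
    rw [Real.rpow_sub (norm_pos_iff.2 hg), Real.rpow_two]
  have hrpow : DifferentiableAt ℝ (fun z => ‖gradient v z‖ ^ (p - 2)) y :=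
    (contDiffAt_norm_gradient_rpow (m := 1) hv hg _).differentiableAt one_ne_zero
  rw [flux_eq, pder_mul hrpow (differentiableAt_pder hv i), pder_norm_gradient_rpow hv hg, hN]
  simp only [ACoef, aCoef, mul_add, add_mul, Finset.sum_add_distrib, mul_ite, ite_mul, mul_one,
    mul_zero, zero_mul, Finset.sum_ite_eq, Finset.mem_univ, if_true, Finset.mul_sum]
  rw [Finset.sum_mul, add_comm]
  congr 1
  exact Finset.sum_congr rfl fun j _ => by ring

theorem sum_aCoef_mul_pder_norm_gradient_rpow {p : ℝ} (hv : ContDiffAt ℝ 2 v y)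
    (hg : gradient v y ≠ 0) (i : Fin n) :
    ∑ j, aCoef p v y i j * pder j (fun z => ‖gradient v z‖ ^ p) y
      = p * ∑ k, pder k v y * pder k (flux p v i) y := by
  simp only [pder_norm_gradient_rpow hv hg, pder_flux hv hg, ACoef, Finset.mul_sum]
  rw [Finset.sum_comm]
  refine Finset.sum_congr rfl fun k _ => Finset.sum_congr rfl fun j _ => ?_
  rw [pder2_comm hv j k]
  ring

theorem pder_const_mul_sum_mul {f g : Fin n → EuclideanSpace ℝ (Fin n) → ℝ}
    (hf : ∀ k, DifferentiableAt ℝ (f k) y) (hg : ∀ k, DifferentiableAt ℝ (g k) y) (c : ℝ)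
    (i : Fin n) :
    pder i (fun z => c * ∑ k, f k z * g k z) y
      = c * ∑ k, (pder i (f k) y * g k y + f k y * pder i (g k) y) := by
  have h := (HasFDerivAt.fun_sum (u := Finset.univ) fun k _ =>
    (hf k).hasFDerivAt.fun_mul (hg k).hasFDerivAt).const_mul c
  rw [pder, h.fderiv]
  simp only [FunLike.coe_smul, FunLike.coe_sum, Pi.smul_apply,
    Finset.sum_apply, add_apply, smul_eq_mul, pder]
  congr 1
  exact Finset.sum_congr rfl fun k _ => by ring

theorem sum_pder2_flux_eq_zero {p : ℝ} (hv : ContDiffAt ℝ 3 v x) (hg : gradient v x ≠ 0)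
    (hph : pLaplacian p v =ᶠ[𝓝 x] 0) (k : Fin n) : ∑ i, pder2 i k (flux p v i) x = 0 := by
  have hflux (i : Fin n) := contDiffAt_flux (p := p) hv hg i
  calc ∑ i, pder2 i k (flux p v i) x = ∑ i, pder2 k i (flux p v i) x :=
        Finset.sum_congr rfl fun i _ => pder2_comm (hflux i) i k
    _ = pder k (pLaplacian p v) x := by
        rw [pLaplacian_eq_sum_pder_flux, pder,
          fderiv_fun_sum fun i _ => differentiableAt_pder (hflux i) i, sum_apply]
        rfl
    _ = 0 := by simp [pder, hph.fderiv_eq]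

theorem eventually_gradient_ne_zero (hv : ContDiffAt ℝ 2 v x) (hg : gradient v x ≠ 0) :
    ∀ᶠ z in 𝓝 x, gradient v z ≠ 0 := by
  have hcont : ContinuousAt (gradient v) x :=
    (InnerProductSpace.toDual ℝ _).symm.continuous.continuousAt.comp
      (hv.fderiv_right (m := 1) le_rfl).continuousAt
  exact hcont.eventually_ne hg

theorem sum_pder_aCoef_mul_pder_norm_gradient_rpow {p : ℝ} (hv : ContDiffAt ℝ 3 v x)
    (hg : gradient v x ≠ 0) (hph : pLaplacian p v =ᶠ[𝓝 x] 0) :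
    ∑ i, pder i (fun y => ∑ j, aCoef p v y i j * pder j (fun z => ‖gradient v z‖ ^ p) y) x
      = p * ∑ i, ∑ j, ACoef p v x i j * ∑ k, pder2 k j v x * pder2 k i v x := by
  have hv2 : ContDiffAt ℝ 2 v x := hv.of_le (by norm_num)
  have hflux (i : Fin n) := contDiffAt_flux (p := p) hv hg i
  have hnear : ∀ᶠ z in 𝓝 x, ContDiffAt ℝ 2 v z ∧ gradient v z ≠ 0 :=
    (hv2.eventually (by simp)).and (eventually_gradient_ne_zero hv2 hg)
  calc ∑ i, pder i (fun y => ∑ j, aCoef p v y i j * pder j (fun z => ‖gradient v z‖ ^ p) y) x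
      = ∑ i, pder i (fun y => p * ∑ k, pder k v y * pder k (flux p v i) y) x := by
        refine Finset.sum_congr rfl fun i _ => ?_
        rw [pder, pder, Filter.EventuallyEq.fderiv_eq]
        filter_upwards [hnear] with z hz
        exact sum_aCoef_mul_pder_norm_gradient_rpow hz.1 hz.2 i
    _ = p * ∑ i, ∑ k, (pder2 i k v x * pder k (flux p v i) x
          + pder k v x * pder2 i k (flux p v i) x) := by
        rw [Finset.mul_sum]
        exact Finset.sum_congr rfl fun i _ => pder_const_mul_sum_mul
          (differentiableAt_pder hv2) (fun k => differentiableAt_pder (hflux i) k) p i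
    _ = p * ∑ i, ∑ k, pder2 i k v x * pder k (flux p v i) x := by
        have hdiv : ∑ i, ∑ k, pder k v x * pder2 i k (flux p v i) x = 0 := by
          rw [Finset.sum_comm]
          simp only [← Finset.mul_sum, sum_pder2_flux_eq_zero hv hg hph, mul_zero,
            Finset.sum_const_zero]
        simp only [Finset.sum_add_distrib, hdiv, add_zero]
    _ = p * ∑ i, ∑ j, ACoef p v x i j * ∑ k, pder2 k j v x * pder2 k i v x := by
        simp only [pder_flux hv2 hg]
        congr 1
        refine Finset.sum_congr rfl fun i _ => ?_
        simp only [Finset.mul_sum]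
        rw [Finset.sum_comm]
        refine Finset.sum_congr rfl fun j _ => Finset.sum_congr rfl fun k _ => ?_
        rw [pder2_comm hv2 i k]
        ring

theorem sum_aCoef_mul_mul_nonneg {p : ℝ} (hp : 1 < p) (v : EuclideanSpace ℝ (Fin n) → ℝ)
    (y : EuclideanSpace ℝ (Fin n)) (ξ : Fin n → ℝ) :
    0 ≤ ∑ i, ∑ j, aCoef p v y i j * ξ i * ξ j := by
  set N := ‖gradient v y‖ ^ 2
  set s := ∑ i, pder i v y * ξ i
  set Q := ∑ i, ξ i ^ 2
  have hexpand :
      ∑ i, ∑ j, aCoef p v y i j * ξ i * ξ j = (Q - s ^ 2 / N) + (p - 1) * (s ^ 2 / N) := by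
    simp only [aCoef, add_mul, Finset.sum_add_distrib, ite_mul, one_mul, zero_mul,
      Finset.sum_ite_eq, Finset.mem_univ, if_true]
    rw [sq s, Finset.sum_mul_sum, show ∀ C, Q - C / N + (p - 1) * (C / N) = Q + (p - 2) * C / N
      by intro C; ring]
    congr 1
    · exact Finset.sum_congr rfl fun i _ => (sq (ξ i)).symm
    · simp only [Finset.sum_div, Finset.mul_sum]
      exact Finset.sum_congr rfl fun i _ => Finset.sum_congr rfl fun j _ => by ring
  have hCS : s ^ 2 / N ≤ Q := by
    apply div_le_of_le_mul₀ (by positivity) (by positivity)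
    rw [show N = _ from norm_gradient_sq v y, mul_comm]
    exact Finset.sum_mul_sq_le_sq_mul_sq _ _ _
  rw [hexpand]
  have ht : 0 ≤ s ^ 2 / N := by positivity
  nlinarith

theorem sum_ACoef_mul_sum_mul_nonneg {p : ℝ} (hp : 1 < p) (v : EuclideanSpace ℝ (Fin n) → ℝ)
    (y : EuclideanSpace ℝ (Fin n)) (M : Fin n → Fin n → ℝ) :
    0 ≤ ∑ i, ∑ j, ACoef p v y i j * ∑ k, M k j * M k i := by
  have h : ∑ i, ∑ j, ACoef p v y i j * ∑ k, M k j * M k i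
      = ∑ k, ‖gradient v y‖ ^ (p - 2) * ∑ i, ∑ j, aCoef p v y i j * M k i * M k j := by
    simp only [ACoef, Finset.mul_sum]
    conv_rhs => rw [Finset.sum_comm]
    refine Finset.sum_congr rfl fun i _ => ?_
    conv_rhs => rw [Finset.sum_comm]
    exact Finset.sum_congr rfl fun j _ => Finset.sum_congr rfl fun k _ => by ring
  rw [h]
  exact Finset.sum_nonneg fun k _ =>
    mul_nonneg (by positivity) (sum_aCoef_mul_mul_nonneg hp v y _)

end PLaplacian

/-- for a p-harmonic function with nonvanishing gradient,
∂_i(a^{ij} ∂_j(|∇v|^p)) = p A^{ij} v_{kj} v_{ki} ≥ 0, i.e. |∇v|^p is a subsolution. -/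
theorem statement_12 (n : ℕ) (p : ℝ) (hp : 1 < p)
    (U : Set (EuclideanSpace ℝ (Fin n))) (hU : IsOpen U)
    (v : EuclideanSpace ℝ (Fin n) → ℝ) (hv : ContDiffOn ℝ 3 v U)
    (hph : ∀ x ∈ U, pLaplacian p v x = 0)
    (hgrad : ∀ x ∈ U, gradient v x ≠ 0) :
    ∀ x ∈ U,
      (∑ i : Fin n,
          fderiv ℝ (fun y => ∑ j : Fin n,
              aCoef p v y i j * pder j (fun z => ‖gradient v z‖ ^ p) y) x
            (EuclideanSpace.single i (1 : ℝ)))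
        = p * ∑ i : Fin n, ∑ j : Fin n,
            ACoef p v x i j * ∑ k : Fin n, pder2 k j v x * pder2 k i v x ∧
      0 ≤ p * ∑ i : Fin n, ∑ j : Fin n,
            ACoef p v x i j * ∑ k : Fin n, pder2 k j v x * pder2 k i v x := by
  intro x hx
  have hph' : pLaplacian p v =ᶠ[𝓝 x] 0 := Filter.eventually_of_mem (hU.mem_nhds hx) hph
  exact ⟨PLaplacian.sum_pder_aCoef_mul_pder_norm_gradient_rpow (hv.contDiffAt (hU.mem_nhds hx))
      (hgrad x hx) hph',
    mul_nonneg (by linarith) (PLaplacian.sum_ACoef_mul_sum_mul_nonneg hp v x _)⟩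
end
end

section
/- Let Ω ⊂ ℝⁿ be a connected open set and let v : Ω → ℝ be a harmonic function (Δv = 0) with |∇v(x)| = 1 for every x ∈ Ω. Then there exist a unit vector a ∈ ℝⁿ and a constant b ∈ ℝ such that v(x) = a·x + b for all x ∈ Ω. -/
open Set Filter
open scoped BigOperators Topology

noncomputable section

/-!
Write `g = ∇v`; its derivative `A = Dg` is the Hessian, symmetric with trace `Δv = 0`.
Differentiating `‖g‖² = 1` and using symmetry gives `A g = 0`. Hence along the ray
`τ ↦ x + τ g(x)` the difference `g - g(x)` solves a linear ODE with zero initial value, so by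
Grönwall `g(x + τ g(x)) = g(x)`. Differentiating this identity in `x` at `q` gives
`Dg(q + t g(q)) ∘ (1 + t A) = A`, so `t · tr (Dg(q + t g(q)) ∘ A) = tr A - tr Dg(q + t g(q)) = 0`;
letting `t → 0⁺` yields `tr A² = 0`, which forces the symmetric `A` to vanish. So `∇v` is
constant on the connected set `Ω` and `v` is affine.
-/

open InnerProductSpace
open scoped Gradient RealInnerProductSpace

section Ray

variable {E : Type*} [NormedAddCommGroup E] [NormedSpace ℝ E]

theorem ContDiffOn.apply_add_smul_self_eq {g : E → E} {U : Set E} {x : E} {T : ℝ}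
    (hU : IsOpen U) (hg : ContDiffOn ℝ 1 g U) (hself : ∀ y ∈ U, fderiv ℝ g y (g y) = 0)
    (hseg : ∀ τ ∈ Icc 0 T, x + τ • g x ∈ U) : ∀ τ ∈ Icc 0 T, g (x + τ • g x) = g x := by
  set s := g x
  set c : ℝ → E := fun τ => x + τ • s
  have hc : Continuous c := by fun_prop
  obtain ⟨K, hK⟩ := isCompact_Icc.exists_bound_of_continuousOn
    ((hg.continuousOn_fderiv_of_isOpen hU le_rfl).comp hc.continuousOn hseg)
  have hzero := eq_zero_of_abs_deriv_le_mul_abs_self_of_eq_zero_right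
    (f := fun τ => g (c τ) - s) (f' := fun τ => fderiv ℝ g (c τ) s) (K := K)
    ((hg.continuousOn.comp hc.continuousOn hseg).sub continuousOn_const) ?_ (by simp [c, s]) ?_
  · exact fun τ hτ => sub_eq_zero.1 (hzero τ hτ)
  · intro τ hτ
    have hgc := ((hg.contDiffAt (hU.mem_nhds (hseg τ (Ico_subset_Icc_self hτ)))).differentiableAt
      one_ne_zero).hasFDerivAt
    have hcτ : HasDerivAt c s τ := by
      simpa only [one_smul, id_eq] using ((hasDerivAt_id τ).smul_const s).const_add x
    exact ((hgc.comp_hasDerivAt τ hcτ).sub_const s).hasDerivWithinAt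
  · intro τ hτ
    have hτ' := Ico_subset_Icc_self hτ
    -- `Dg (c τ)` kills `g (c τ)`, which makes the ODE for `g (c τ) - s` linear
    calc ‖fderiv ℝ g (c τ) s‖ = ‖fderiv ℝ g (c τ) (g (c τ) - s)‖ := by
          rw [map_sub, hself _ (hseg τ hτ'), zero_sub, norm_neg]
      _ ≤ K * ‖g (c τ) - s‖ := (ContinuousLinearMap.le_opNorm _ _).trans
          (mul_le_mul_of_nonneg_right (hK τ hτ') (norm_nonneg _))

theorem ContDiffOn.eventually_apply_add_smul_self_eq {g : E → E} {U : Set E} {q : E}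
    (hU : IsOpen U) (hg : ContDiffOn ℝ 1 g U) (hself : ∀ y ∈ U, fderiv ℝ g y (g y) = 0)
    (hq : q ∈ U) :
    ∃ R : ℝ, 0 < R ∧ ∀ t ∈ Icc 0 R, ∀ᶠ x in 𝓝 q, x + t • g x ∈ U ∧ g (x + t • g x) = g x := by
  have hφ : ContinuousAt (fun p : E × ℝ => p.1 + p.2 • g p.1) (q, 0) :=
    continuousAt_fst.add (continuousAt_snd.smul
      ((hg.continuousOn.continuousAt (hU.mem_nhds hq)).comp continuousAt_fst))
  obtain ⟨V, hV, W, hW, hVW⟩ := mem_nhds_prod_iff.1 (hφ (hU.mem_nhds (by simpa using hq)))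
  obtain ⟨r, hr, hrW⟩ := Metric.mem_nhds_iff.1 hW
  refine ⟨r / 2, half_pos hr, fun t ht => ?_⟩
  have hseg : ∀ x ∈ V, ∀ τ ∈ Icc 0 (r / 2), x + τ • g x ∈ U := fun x hx τ hτ =>
    hVW (mk_mem_prod hx (hrW (by
      rw [Metric.mem_ball, Real.dist_0_eq_abs, abs_of_nonneg hτ.1]; linarith [hτ.2])))
  filter_upwards [hV] with x hx
  exact ⟨hseg x hx t ht, hg.apply_add_smul_self_eq hU hself (hseg x hx) t ht⟩

theorem fderiv_comp_add_smul_self {g : E → E} {q : E} {t : ℝ}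
    (h : ∀ᶠ x in 𝓝 q, g (x + t • g x) = g x) (hq : DifferentiableAt ℝ g q)
    (ht : DifferentiableAt ℝ g (q + t • g q)) :
    (fderiv ℝ g (q + t • g q)).comp (ContinuousLinearMap.id ℝ E + t • fderiv ℝ g q) =
      fderiv ℝ g q := by
  have hφ : HasFDerivAt (fun x => x + t • g x)
      (ContinuousLinearMap.id ℝ E + t • fderiv ℝ g q) q :=
    (hasFDerivAt_id q).add (hq.hasFDerivAt.const_smul t)
  exact ((ht.hasFDerivAt.comp q hφ).congr_of_eventuallyEq
    (h.mono fun x hx => hx.symm)).unique hq.hasFDerivAt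

theorem trace_comp_eq_zero_of_comp_id_add_smul_eq {A B : E →L[ℝ] E} {t : ℝ} (ht : t ≠ 0)
    (h : B.comp (ContinuousLinearMap.id ℝ E + t • A) = A) (hA : LinearMap.trace ℝ E A = 0)
    (hB : LinearMap.trace ℝ E B = 0) : LinearMap.trace ℝ E (B.comp A : E →L[ℝ] E) = 0 := by
  have htr := congr(LinearMap.trace ℝ E ($h : E →ₗ[ℝ] E))
  rw [ContinuousLinearMap.comp_add, ContinuousLinearMap.comp_id, ContinuousLinearMap.comp_smul,
    ContinuousLinearMap.toLinearMap_add, ContinuousLinearMap.toLinearMap_smul, map_add, map_smul,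
    hA, hB, zero_add, smul_eq_mul] at htr
  exact (mul_eq_zero.1 htr).resolve_left ht

end Ray

theorem LinearMap.IsSymmetric.eq_zero_of_trace_comp_self {E : Type*} [NormedAddCommGroup E]
    [InnerProductSpace ℝ E] [FiniteDimensional ℝ E] {T : E →ₗ[ℝ] E} (hT : T.IsSymmetric)
    (h : LinearMap.trace ℝ E (T ∘ₗ T) = 0) : T = 0 := by
  let b := stdOrthonormalBasis ℝ E
  rw [LinearMap.trace_eq_sum_inner _ b] at h
  simp_rw [LinearMap.comp_apply, ← hT _ (T _), real_inner_self_eq_norm_sq] at h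
  have hb := (Finset.sum_eq_zero_iff_of_nonneg (fun i _ => sq_nonneg _)).1 h
  exact b.toBasis.ext fun i => by simpa using hb i (Finset.mem_univ i)

theorem inner_fderiv_apply_self_eq_zero {E : Type*} [NormedAddCommGroup E]
    [InnerProductSpace ℝ E] {g : E → E} {x : E} (hg : DifferentiableAt ℝ g x)
    (hunit : ∀ᶠ y in 𝓝 x, ‖g y‖ = 1) (u : E) : ⟪fderiv ℝ g x u, g x⟫ = 0 := by
  have hconst : HasFDerivAt (fun y => ‖g y‖ ^ 2) (0 : E →L[ℝ] ℝ) x :=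
    (hasFDerivAt_const (1 : ℝ) x).congr_of_eventuallyEq (hunit.mono fun y hy => by simp [hy])
  have h := congr($(hg.hasFDerivAt.norm_sq.unique hconst) u)
  simpa [real_inner_comm] using h

section Gradient

variable {E : Type*} [NormedAddCommGroup E] [InnerProductSpace ℝ E] [CompleteSpace E]
  {v : E → ℝ} {x : E}

theorem ContDiffAt.gradient {m n : WithTop ℕ∞} (h : ContDiffAt ℝ n v x) (hmn : m + 1 ≤ n) :
    ContDiffAt ℝ m (∇ v) x :=
  (toDual ℝ E).symm.contDiff.contDiffAt.comp x (h.fderiv_right hmn)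

theorem ContDiffOn.gradient_of_isOpen {U : Set E} {m n : WithTop ℕ∞} (hv : ContDiffOn ℝ n v U)
    (hU : IsOpen U) (hmn : m + 1 ≤ n) : ContDiffOn ℝ m (∇ v) U := fun _ hx =>
  ((hv.contDiffAt (hU.mem_nhds hx)).gradient hmn).contDiffWithinAt

theorem inner_fderiv_gradient_apply (u w : E) :
    ⟪fderiv ℝ (∇ v) x u, w⟫ = fderiv ℝ (fderiv ℝ v) x u w := by
  change ⟪fderiv ℝ ((toDual ℝ E).symm ∘ fderiv ℝ v) x u, w⟫ = _
  rw [LinearIsometryEquiv.comp_fderiv]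
  exact toDual_symm_apply

theorem ContDiffAt.isSymmetric_fderiv_gradient (h : ContDiffAt ℝ 2 v x) :
    (fderiv ℝ (∇ v) x : E →ₗ[ℝ] E).IsSymmetric := by
  intro u w
  rw [ContinuousLinearMap.coe_coe, inner_fderiv_gradient_apply, real_inner_comm,
    inner_fderiv_gradient_apply, (h.isSymmSndFDerivAt (by simp)).eq]

theorem fderiv_gradient_apply_gradient_eq_zero (h : ContDiffAt ℝ 2 v x)
    (hunit : ∀ᶠ y in 𝓝 x, ‖∇ v y‖ = 1) : fderiv ℝ (∇ v) x (∇ v x) = 0 := by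
  set A := fderiv ℝ (∇ v) x
  have hA : ∀ u, ⟪A u, ∇ v x⟫ = 0 :=
    inner_fderiv_apply_self_eq_zero ((h.gradient le_rfl).differentiableAt one_ne_zero) hunit
  rw [← inner_self_eq_zero (𝕜 := ℝ), ← ContinuousLinearMap.coe_coe A,
    h.isSymmetric_fderiv_gradient, real_inner_comm]
  exact hA _

theorem IsOpen.exists_eq_inner_add_of_gradient_eq {U : Set E} {a : E} (hU : IsOpen U)
    (hU' : IsPreconnected U) (hv : DifferentiableOn ℝ v U) (ha : ∀ y ∈ U, ∇ v y = a) :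
    ∃ b, ∀ y ∈ U, v y = ⟪a, y⟫ + b := by
  obtain ⟨b, hb⟩ := hU.exists_eq_add_of_fderiv_eq hU' hv
    (innerSL ℝ a).differentiable.differentiableOn fun y hy => by
      ext w
      rw [(innerSL ℝ a).fderiv, ← inner_gradient_left, ha y hy, innerSL_apply_apply]
  exact ⟨b, fun y hy => by simpa using hb hy⟩

end Gradient

theorem fderiv_gradient_eq_zero_of_norm_gradient_eq_one {E : Type*} [NormedAddCommGroup E]
    [InnerProductSpace ℝ E] [FiniteDimensional ℝ E] {v : E → ℝ} {U : Set E} (hU : IsOpen U)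
    (hv : ContDiffOn ℝ 2 v U) (hharm : ∀ x ∈ U, LinearMap.trace ℝ E (fderiv ℝ (∇ v) x) = 0)
    (hunit : ∀ x ∈ U, ‖∇ v x‖ = 1) {q : E} (hq : q ∈ U) : fderiv ℝ (∇ v) q = 0 := by
  set g := ∇ v
  set A := fderiv ℝ g q
  have hg : ContDiffOn ℝ 1 g U := hv.gradient_of_isOpen hU le_rfl
  have hgd : ∀ y ∈ U, DifferentiableAt ℝ g y := fun y hy =>
    (hg.contDiffAt (hU.mem_nhds hy)).differentiableAt one_ne_zero
  have hself : ∀ y ∈ U, fderiv ℝ g y (g y) = 0 := fun y hy =>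
    fderiv_gradient_apply_gradient_eq_zero (hv.contDiffAt (hU.mem_nhds hy))
      (eventually_of_mem (hU.mem_nhds hy) hunit)
  obtain ⟨R, hR, hray⟩ := hg.eventually_apply_add_smul_self_eq hU hself hq
  have htrace : ∀ t ∈ Ioc 0 R,
      LinearMap.trace ℝ E ((fderiv ℝ g (q + t • g q)).comp A : E →L[ℝ] E) = 0 := by
    intro t ht
    have hray_t := hray t (Ioc_subset_Icc_self ht)
    have hmem := hray_t.self_of_nhds.1
    exact trace_comp_eq_zero_of_comp_id_add_smul_eq ht.1.ne'
      (fderiv_comp_add_smul_self (hray_t.mono fun x hx => hx.2) (hgd q hq) (hgd _ hmem))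
      (hharm q hq) (hharm _ hmem)
  have hlim : Tendsto
      (fun t : ℝ => LinearMap.trace ℝ E ((fderiv ℝ g (q + t • g q)).comp A : E →L[ℝ] E)) (𝓝 0)
      (𝓝 (LinearMap.trace ℝ E (A.comp A : E →L[ℝ] E))) := by
    have htr : Continuous fun T : E →L[ℝ] E => LinearMap.trace ℝ E (T : E →ₗ[ℝ] E) :=
      (LinearMap.trace ℝ E ∘ₗ ContinuousLinearMap.coeLM ℝ).continuous_of_finiteDimensional
    have hray0 : ContinuousAt (fun t : ℝ => q + t • g q) 0 := by fun_prop
    have hB : ContinuousAt (fun t : ℝ => fderiv ℝ g (q + t • g q)) 0 := by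
      refine ContinuousAt.comp (g := fderiv ℝ g) ?_ hray0
      simpa using (hg.continuousOn_fderiv_of_isOpen hU le_rfl).continuousAt (hU.mem_nhds hq)
    convert (htr.continuousAt.comp (hB.clm_comp (continuousAt_const (y := A)))).tendsto
      using 2 <;> simp [A]
  have hAA : LinearMap.trace ℝ E (A.comp A : E →L[ℝ] E) = 0 :=
    tendsto_nhds_unique (hlim.mono_left nhdsWithin_le_nhds)
      (tendsto_const_nhds.congr' (eventually_of_mem (Ioc_mem_nhdsGT hR) fun t ht =>
        (htrace t ht).symm))
  exact ContinuousLinearMap.coe_injective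
    ((hv.contDiffAt (hU.mem_nhds hq)).isSymmetric_fderiv_gradient.eq_zero_of_trace_comp_self hAA)

theorem sum_pder2_self_eq_trace_fderiv_gradient {n : ℕ} {v : EuclideanSpace ℝ (Fin n) → ℝ}
    {x : EuclideanSpace ℝ (Fin n)} (h : DifferentiableAt ℝ (∇ v) x) :
    ∑ i, pder2 i i v x = LinearMap.trace ℝ (EuclideanSpace ℝ (Fin n)) (fderiv ℝ (∇ v) x) := by
  rw [LinearMap.trace_eq_sum_inner _ (EuclideanSpace.basisFun (Fin n) ℝ)]
  refine Finset.sum_congr rfl fun i _ => ?_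
  have hpder : (fun y => pder i v y) = innerSL ℝ (EuclideanSpace.single i 1) ∘ ∇ v := by
    ext y
    rw [Function.comp_apply, innerSL_apply_apply, real_inner_comm, inner_gradient_left, pder]
  rw [pder2, hpder, fderiv_comp x (innerSL ℝ _).differentiableAt h, ContinuousLinearMap.fderiv]
  simp

/-- a harmonic function with |∇v| ≡ 1 on a connected open set is affine. -/
theorem statement_13 (n : ℕ) (Ω : Set (EuclideanSpace ℝ (Fin n))) (hΩo : IsOpen Ω) (hΩc : IsConnected Ω)
    (v : EuclideanSpace ℝ (Fin n) → ℝ) (hv : ContDiffOn ℝ 2 v Ω)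
    (hharm : ∀ x ∈ Ω, ∑ i : Fin n, pder2 i i v x = 0)
    (hgrad : ∀ x ∈ Ω, ‖gradient v x‖ = 1) :
    ∃ (a : EuclideanSpace ℝ (Fin n)) (b : ℝ), ‖a‖ = 1 ∧ ∀ x ∈ Ω, v x = (inner ℝ a x : ℝ) + b := by
  have hg : DifferentiableOn ℝ (∇ v) Ω :=
    (hv.gradient_of_isOpen hΩo le_rfl).differentiableOn one_ne_zero
  have hhess : ∀ x ∈ Ω, fderiv ℝ (∇ v) x = 0 :=
    fun x hx => fderiv_gradient_eq_zero_of_norm_gradient_eq_one hΩo hv (fun y hy => by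
      rw [← sum_pder2_self_eq_trace_fderiv_gradient (hg.differentiableAt (hΩo.mem_nhds hy)),
        hharm y hy]) hgrad hx
  obtain ⟨q, hq⟩ := hΩc.nonempty
  obtain ⟨b, hb⟩ := hΩo.exists_eq_inner_add_of_gradient_eq hΩc.isPreconnected
    (hv.differentiableOn two_ne_zero) fun x hx =>
      hΩo.is_const_of_fderiv_eq_zero hΩc.isPreconnected hg hhess hx hq
  exact ⟨∇ v q, b, hgrad q hq, hb⟩
end
end
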